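/- (Exponential in D(D,D,4).) Let m₁, m₂, m₃, m₄ be real numbers. Define x₁(t) = e^{m₁t} and x_s(t) = m_s·t·e^{m₁t} for s = 2,3,4. Then for every real t the functions satisfy the associated system: x₁'(t) = m₁x₁, x₂'(t) = m₂x₁ + m₁x₂, x₃'(t) = m₃x₁ + m₁x₃, x₄'(t) = m₄x₁ − m₃x₂ + m₂x₃ + m₁x₄ (each as a HasDerivAt statement), and (x₁(0), x₂(0), x₃(0), x₄(0)) = (1, 0, 0, 0); this establishes the representation Exp(M) = e^{m₁}(1 + m₂·i + m₃·j + m₄·k). -/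

import Mathlib

open Real

lemma hasDerivAt_exp_const_mul (a t : ℝ) :
    HasDerivAt (fun t => exp (a * t)) (a * exp (a * t)) t := by
  simpa [mul_comm] using ((hasDerivAt_id t).const_mul a).exp

lemma hasDerivAt_const_mul_mul_exp_const_mul (a c t : ℝ) :
    HasDerivAt (fun t => c * t * exp (a * t))
      (c * exp (a * t) + a * (c * t * exp (a * t))) t :=
  (((hasDerivAt_id' t).const_mul c).mul (hasDerivAt_exp_const_mul a t)).congr_deriv
    (by ring)

/-- Exponential in D(D,D,4) = ℍ[ℝ,0,0]: establishes Exp(M) = e^{m₁}(1 + m₂·i + m₃·j + m₄·k). The given functions solve the associated real linear ODE system of Ẋ = M·X with initial value (1,0,0,0). -/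
theorem exp_DD (m₁ m₂ m₃ m₄ : ℝ)
    (x₁ x₂ x₃ x₄ : ℝ → ℝ)
    (hx₁ : x₁ = fun t => Real.exp (m₁ * t))
    (hx₂ : x₂ = fun t => m₂ * t * Real.exp (m₁ * t))
    (hx₃ : x₃ = fun t => m₃ * t * Real.exp (m₁ * t))
    (hx₄ : x₄ = fun t => m₄ * t * Real.exp (m₁ * t))
    :
    (∀ t : ℝ,
      HasDerivAt x₁ (m₁ * x₁ t) t ∧
      HasDerivAt x₂ (m₂ * x₁ t + m₁ * x₂ t) t ∧
      HasDerivAt x₃ (m₃ * x₁ t + m₁ * x₃ t) t ∧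
      HasDerivAt x₄ (m₄ * x₁ t - m₃ * x₂ t + m₂ * x₃ t + m₁ * x₄ t) t) ∧
    x₁ 0 = 1 ∧ x₂ 0 = 0 ∧ x₃ 0 = 0 ∧ x₄ 0 = 0 := by
  subst hx₁ hx₂ hx₃ hx₄
  refine ⟨fun t => ⟨hasDerivAt_exp_const_mul m₁ t,
    hasDerivAt_const_mul_mul_exp_const_mul m₁ m₂ t,
    hasDerivAt_const_mul_mul_exp_const_mul m₁ m₃ t, ?_⟩, by simp⟩
  -- The terms `-m₃ x₂ + m₂ x₃`, coming from `i·j = -j·i`, cancel.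
  convert hasDerivAt_const_mul_mul_exp_const_mul m₁ m₄ t using 1
  ring
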